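/- For every even integer k ≥ 6 and every choice of a (k−4)-regular graph H1 of order 2k−3 and a (k−6)-regular graph H2 of order 2k−5, the graphs Γ and Γ' defined below are both (3k−5)-regular graphs of order 10k−8, and Γ and Γ' are cospectral with respect to the adjacency matrix. -/

import Mathlib

open scoped Classical

/-- Two finite graphs are cospectral (w.r.t. the adjacency matrix) if their adjacency
matrices have the same characteristic polynomial. -/
noncomputable def Cospectral {V W : Type*} [Fintype V] [DecidableEq V] [Fintype W]
    [DecidableEq W] (G : SimpleGraph V) (H : SimpleGraph W) : Prop :=
  (G.adjMatrix ℤ).charpoly = (H.adjMatrix ℤ).charpoly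

/-- A graph is `d`-regular if every vertex has exactly `d` neighbors. -/
def IsRegularGraph {V : Type*} (G : SimpleGraph V) (d : ℕ) : Prop :=
  ∀ v : V, (G.neighborSet v).ncard = d

/-- `G` has vertex-connectivity exactly `n`: some set of `n` vertices disconnects `G`
(the graph induced on its complement is not connected), and no smaller set does. -/
def HasVertexConnectivity {V : Type*} (G : SimpleGraph V) (n : ℕ) : Prop :=
  (∃ S : Set V, S.ncard = n ∧ ¬(G.induce Sᶜ).Connected) ∧
    ∀ S : Set V, S.ncard < n → (G.induce Sᶜ).Connected

/-- `G` has edge-connectivity exactly `n`: some set of `n` edges of `G` disconnects `G`,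
and no smaller set of edges does. -/
def HasEdgeConnectivity {V : Type*} (G : SimpleGraph V) (n : ℕ) : Prop :=
  (∃ F : Set (Sym2 V), F ⊆ G.edgeSet ∧ F.ncard = n ∧ ¬(G.deleteEdges F).Connected) ∧
    ∀ F : Set (Sym2 V), F ⊆ G.edgeSet → F.ncard < n → (G.deleteEdges F).Connected

/-- Adjacency rule of the cycle of length `k+1` on `{0, …, k}` (entries of `C`). -/
def cycRel (k : ℕ) (a b : ℕ) : Prop :=
  (a + 1) % (k + 1) = b ∨ (b + 1) % (k + 1) = a

/-- Entries of the `2k × 2k` matrix `L = [[J_{k-1}, O], [O, J_{k+1} - C]]`. -/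
def LRel (k : ℕ) (x x' : Fin (2 * k)) : Prop :=
  (x.val < k - 1 ∧ x'.val < k - 1) ∨
    (k - 1 ≤ x.val ∧ k - 1 ≤ x'.val ∧ ¬cycRel k (x.val - (k - 1)) (x'.val - (k - 1)))

/-- The class `Y`, ordered as: the `2k-3` vertices of `H1`, the `2k-5` vertices of `H2`,
then `k-1` vertices, then `k+1` vertices (order `6k-8`). -/
abbrev YT (k : ℕ) := Fin (2 * k - 3) ⊕ (Fin (2 * k - 5) ⊕ (Fin (k - 1) ⊕ Fin (k + 1)))

/-- The vertex set of `Γ` and `Γ'`: `X1` (size `2k`), `X2` (size `2k`), `Y`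
(size `6k-8`); total order `10k-8`. -/
abbrev VE (k : ℕ) := Fin (2 * k) ⊕ (Fin (2 * k) ⊕ YT k)

/-- The column block (`1, 2, 3, 4`, or `0` for the zero block) of a column of the
`4k × (6k-8)` matrix `[M1; M2]`: the five column blocks have widths
`k-2, k-2, k-2, k-2, 2k`. -/
def colBlk (k : ℕ) : YT k → ℕ
  | Sum.inl c => if c.val < k - 2 then 1 else if c.val < 2 * k - 4 then 2 else 3
  | Sum.inr (Sum.inl c) => if c.val < k - 3 then 3 else 4
  | _ => 0

/-- Entries of the matrix `B`, the adjacency matrix of the graph `H` induced on `Y`: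
`[[B1, O, J, O], [O, B2, O, J], [J, O, J-I, O], [O, J, O, J-I]]`
(the diagonal is removed by `SimpleGraph.fromRel`). -/
def yRel (k : ℕ) (H1 : SimpleGraph (Fin (2 * k - 3))) (H2 : SimpleGraph (Fin (2 * k - 5))) :
    YT k → YT k → Prop
  | Sum.inl a, Sum.inl b => H1.Adj a b
  | Sum.inl _, Sum.inr (Sum.inr (Sum.inl _)) => True
  | Sum.inr (Sum.inl a), Sum.inr (Sum.inl b) => H2.Adj a b
  | Sum.inr (Sum.inl _), Sum.inr (Sum.inr (Sum.inr _)) => True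
  | Sum.inr (Sum.inr (Sum.inl _)), Sum.inr (Sum.inr (Sum.inl _)) => True
  | Sum.inr (Sum.inr (Sum.inr _)), Sum.inr (Sum.inr (Sum.inr _)) => True
  | _, _ => False

/-- The relation defining the graph with adjacency matrix
`[[A1, L, M1], [Lᵀ, A2, M2], [M1ᵀ, M2ᵀ, B]]` where `A1 = A2 = L - I` and where the
matrix `[M1; M2]` has the all-ones block `J_{k,k-2}` exactly in row block `mrow b` of
column block `b` (rows are grouped into four blocks of height `k`). -/
def edgeRel (k : ℕ) (H1 : SimpleGraph (Fin (2 * k - 3))) (H2 : SimpleGraph (Fin (2 * k - 5)))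
    (mrow : ℕ → ℕ) : VE k → VE k → Prop
  | Sum.inl x, Sum.inl x' => LRel k x x'
  | Sum.inl x, Sum.inr (Sum.inl x') => LRel k x x'
  | Sum.inl x, Sum.inr (Sum.inr c) =>
      colBlk k c ≠ 0 ∧ mrow (colBlk k c) = (if x.val < k then 1 else 2)
  | Sum.inr (Sum.inl x), Sum.inr (Sum.inl x') => LRel k x x'
  | Sum.inr (Sum.inl x), Sum.inr (Sum.inr c) =>
      colBlk k c ≠ 0 ∧ mrow (colBlk k c) = (if x.val < k then 3 else 4)
  | Sum.inr (Sum.inr c), Sum.inr (Sum.inr c') => yRel k H1 H2 c c'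
  | _, _ => False

/-- Row-block placement for `[M1; M2] = [[O,J,O,O,O],[O,O,J,O,O],[J,O,O,O,O],[O,O,O,J,O]]`. -/
def mrowGamma : ℕ → ℕ := fun b =>
  if b = 1 then 3 else if b = 2 then 1 else if b = 3 then 2 else if b = 4 then 4 else 0

/-- Row-block placement for `[M1'; M2'] = [[O,O,J,O,O],[O,J,O,O,O],[O,O,O,J,O],[J,O,O,O,O]]`. -/
def mrowGamma' : ℕ → ℕ := fun b =>
  if b = 1 then 4 else if b = 2 then 2 else if b = 3 then 1 else if b = 4 then 3 else 0

/-- The graph `Γ`. -/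
def GammaE (k : ℕ) (H1 : SimpleGraph (Fin (2 * k - 3))) (H2 : SimpleGraph (Fin (2 * k - 5))) :
    SimpleGraph (VE k) := SimpleGraph.fromRel (edgeRel k H1 H2 mrowGamma)

/-- The graph `Γ'`, obtained from `Γ` by Godsil–McKay switching. -/
def GammaE' (k : ℕ) (H1 : SimpleGraph (Fin (2 * k - 3))) (H2 : SimpleGraph (Fin (2 * k - 5))) :
    SimpleGraph (VE k) := SimpleGraph.fromRel (edgeRel k H1 H2 mrowGamma')

open Finset

section Cyc
variable {k : ℕ}

lemma cycRel_iff (hk : 2 ≤ k) {a b : ℕ} (ha : a ≤ k) (hb : b ≤ k) :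
    cycRel k a b ↔ b = (if a = k then 0 else a + 1) ∨ b = (if a = 0 then k else a - 1) := by
  have h1 : (a + 1) % (k + 1) = if a = k then 0 else a + 1 := by
    split_ifs with h
    · subst h; exact Nat.mod_self _
    · exact Nat.mod_eq_of_lt (by omega)
  have h2 : (b + 1) % (k + 1) = if b = k then 0 else b + 1 := by
    split_ifs with h
    · subst h; exact Nat.mod_self _
    · exact Nat.mod_eq_of_lt (by omega)
  unfold cycRel
  rw [h1, h2]
  split_ifs <;> omega

lemma cyc_irrefl (hk : 2 ≤ k) {a : ℕ} (ha : a ≤ k) : ¬ cycRel k a a := by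
  rw [cycRel_iff hk ha ha]; split_ifs <;> omega

lemma cyc_count (hk : 2 ≤ k) {a : ℕ} (ha : a ≤ k) :
    #((range (k + 1)).filter (fun b => cycRel k a b)) = 2 := by
  have h : (range (k + 1)).filter (fun b => cycRel k a b) =
      {(if a = k then 0 else a + 1), (if a = 0 then k else a - 1)} := by
    ext b
    simp only [mem_filter, mem_range, mem_insert, mem_singleton]
    constructor
    · rintro ⟨hb, h⟩; exact (cycRel_iff hk ha (by omega)).1 h
    · intro h
      have hb : b ≤ k := by split_ifs at h <;> omega
      exact ⟨by omega, (cycRel_iff hk ha hb).2 h⟩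
  rw [h, card_insert_of_notMem (by simp only [mem_singleton]; split_ifs <;> omega),
    card_singleton]

lemma card_range_filter_lt (n m : ℕ) : #((range n).filter (fun x => x < m)) = min m n := by
  have h : (range n).filter (fun x => x < m) = range (min m n) := by
    ext x; simp only [mem_filter, mem_range]; omega
  rw [h, card_range]

lemma card_range_filter_ge (n m : ℕ) : #((range n).filter (fun x => m ≤ x)) = n - m := by
  have h : (range n).filter (fun x => m ≤ x) = Finset.Ico m n := by
    ext x; simp only [mem_filter, mem_range, mem_Ico]; omega
  rw [h, Nat.card_Ico]

lemma card_fin_filter (n : ℕ) (p : ℕ → Prop) [DecidablePred p] :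
    #((univ : Finset (Fin n)).filter (fun x => p x.val)) = #((range n).filter p) := by
  apply Finset.card_bij (fun x _ => x.val)
  · intro a ha; simp only [mem_filter, mem_univ, true_and] at ha
    simp only [mem_filter, mem_range]; exact ⟨a.isLt, ha⟩
  · intro a _ b _ h; exact Fin.ext h
  · intro b hb; simp only [mem_filter, mem_range] at hb
    exact ⟨⟨b, hb.1⟩, by simp only [mem_filter, mem_univ, true_and]; exact hb.2, rfl⟩

lemma card_shift (m j : ℕ) (p : ℕ → Prop) [DecidablePred p] :
    #((range (j + m)).filter (fun x => j ≤ x ∧ p (x - j))) = #((range m).filter p) := by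
  apply Finset.card_bij (fun x _ => x - j)
  · intro a ha; simp only [mem_filter, mem_range] at ha ⊢
    exact ⟨by omega, ha.2.2⟩
  · intro a ha b hb h; simp only [mem_filter, mem_range] at ha hb; omega
  · intro b hb; simp only [mem_filter, mem_range] at hb
    refine ⟨b + j, ?_, by omega⟩
    simp only [mem_filter, mem_range]
    exact ⟨by omega, by omega, by simpa [Nat.add_sub_cancel] using hb.2⟩

lemma lrel_symm {k : ℕ} (x x' : Fin (2 * k)) : LRel k x x' ↔ LRel k x' x := by
  unfold LRel cycRel; tauto

lemma lrel_refl {k : ℕ} (hk : 6 ≤ k) (x : Fin (2 * k)) : LRel k x x := by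
  by_cases h : x.val < k - 1
  · exact Or.inl ⟨h, h⟩
  · exact Or.inr ⟨by omega, by omega, cyc_irrefl (by omega) (by have := x.isLt; omega)⟩

lemma lrel_card {k : ℕ} (hk : 6 ≤ k) (x : Fin (2 * k)) :
    #((univ : Finset (Fin (2 * k))).filter (fun x' => LRel k x x')) = k - 1 := by
  have h0 : (univ : Finset (Fin (2 * k))).filter (fun x' => LRel k x x') =
      (univ : Finset (Fin (2 * k))).filter (fun x' => (x.val < k - 1 ∧ x'.val < k - 1) ∨
        (k - 1 ≤ x.val ∧ k - 1 ≤ x'.val ∧ ¬cycRel k (x.val - (k - 1)) (x'.val - (k - 1)))) :=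
    filter_congr (fun y _ => Iff.rfl)
  rw [h0, card_fin_filter (2 * k) (fun m => (x.val < k - 1 ∧ m < k - 1) ∨
    (k - 1 ≤ x.val ∧ k - 1 ≤ m ∧ ¬cycRel k (x.val - (k - 1)) (m - (k - 1))))]
  by_cases hx : x.val < k - 1
  · have hc : (range (2 * k)).filter (fun m => (x.val < k - 1 ∧ m < k - 1) ∨
        (k - 1 ≤ x.val ∧ k - 1 ≤ m ∧ ¬cycRel k (x.val - (k - 1)) (m - (k - 1)))) =
        (range (2 * k)).filter (fun m => m < k - 1) := by
      apply filter_congr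
      intro m _
      constructor
      · rintro (⟨_, h2⟩ | ⟨h1, _⟩)
        · exact h2
        · omega
      · intro h; exact Or.inl ⟨hx, h⟩
    rw [hc, card_range_filter_lt]; omega
  · set a := x.val - (k - 1) with ha
    have hak : a ≤ k := by have := x.isLt; omega
    have hc : (range (2 * k)).filter (fun m => (x.val < k - 1 ∧ m < k - 1) ∨
        (k - 1 ≤ x.val ∧ k - 1 ≤ m ∧ ¬cycRel k (x.val - (k - 1)) (m - (k - 1)))) =
        (range (2 * k)).filter (fun m => k - 1 ≤ m ∧ ¬cycRel k a (m - (k - 1))) := by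
      apply filter_congr
      intro m _
      constructor
      · rintro (⟨h1, _⟩ | ⟨_, h2, h3⟩)
        · omega
        · exact ⟨h2, h3⟩
      · intro h; exact Or.inr ⟨by omega, h.1, h.2⟩
    rw [hc]
    have hsplit : (range (2 * k)).filter (fun m => k - 1 ≤ m ∧ ¬cycRel k a (m - (k - 1))) =
        ((range (2 * k)).filter (fun m => k - 1 ≤ m)) \
          ((range (2 * k)).filter (fun m => k - 1 ≤ m ∧ cycRel k a (m - (k - 1)))) := by
      ext m; simp only [mem_filter, mem_sdiff, mem_range]; tauto
    rw [hsplit, card_sdiff_of_subset (by intro m hm; simp only [mem_filter] at hm ⊢; tauto)]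
    have h1 : #((range (2 * k)).filter (fun m => k - 1 ≤ m)) = k + 1 := by
      rw [card_range_filter_ge]; omega
    have h2 : #((range (2 * k)).filter (fun m => k - 1 ≤ m ∧ cycRel k a (m - (k - 1)))) = 2 := by
      rw [show 2 * k = (k - 1) + (k + 1) by omega, card_shift (k + 1) (k - 1)
        (fun b => cycRel k a b), cyc_count (by omega) hak]
    rw [h1, h2]; omega

lemma lrel_card_ne {k : ℕ} (hk : 6 ≤ k) (x : Fin (2 * k)) :
    #((univ : Finset (Fin (2 * k))).filter (fun x' => x ≠ x' ∧ LRel k x x')) = k - 2 := by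
  have h : (univ : Finset (Fin (2 * k))).filter (fun x' => x ≠ x' ∧ LRel k x x') =
      ((univ : Finset (Fin (2 * k))).filter (fun x' => LRel k x x')).erase x := by
    ext y
    simp only [mem_filter, mem_univ, true_and, mem_erase]
    constructor
    · rintro ⟨h1, h2⟩; exact ⟨fun h => h1 h.symm, h2⟩
    · rintro ⟨h1, h2⟩; exact ⟨fun h => h1 h.symm, h2⟩
  rw [h, card_erase_of_mem (mem_filter.mpr ⟨mem_univ x, lrel_refl hk x⟩), lrel_card hk]
  omega

lemma count_rho1 {k : ℕ} (hk : 6 ≤ k) :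
    #((univ : Finset (Fin (2 * k))).filter (fun x => x.val < k)) = k := by
  rw [card_fin_filter (2 * k) (fun m => m < k), card_range_filter_lt]; omega

lemma count_rho2 {k : ℕ} (hk : 6 ≤ k) :
    #((univ : Finset (Fin (2 * k))).filter (fun x => ¬ x.val < k)) = k := by
  have h : (univ : Finset (Fin (2 * k))).filter (fun x => ¬ x.val < k) =
      (univ : Finset (Fin (2 * k))).filter (fun x => k ≤ x.val) :=
    filter_congr (fun y _ => by omega)
  rw [h, card_fin_filter (2 * k) (fun m => k ≤ m), card_range_filter_ge]; omega

lemma colBlk_inl {k : ℕ} (a : Fin (2 * k - 3)) :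
    colBlk k (Sum.inl a) = if a.val < k - 2 then 1 else if a.val < 2 * k - 4 then 2 else 3 := rfl

lemma colBlk_inr1 {k : ℕ} (a : Fin (2 * k - 5)) :
    colBlk k (Sum.inr (Sum.inl a)) = if a.val < k - 3 then 3 else 4 := rfl

lemma colBlk_inr2 {k : ℕ} (a : Fin (k - 1)) :
    colBlk k (Sum.inr (Sum.inr (Sum.inl a))) = 0 := rfl

lemma colBlk_inr3 {k : ℕ} (a : Fin (k + 1)) :
    colBlk k (Sum.inr (Sum.inr (Sum.inr a))) = 0 := rfl

lemma colBlk_cases {k : ℕ} (c : YT k) :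
    colBlk k c = 0 ∨ colBlk k c = 1 ∨ colBlk k c = 2 ∨ colBlk k c = 3 ∨ colBlk k c = 4 := by
  rcases c with a | a | a | a
  · rw [colBlk_inl]; split_ifs <;> tauto
  · rw [colBlk_inr1]; split_ifs <;> tauto
  · rw [colBlk_inr2]; tauto
  · rw [colBlk_inr3]; tauto

lemma colBlk_count {k : ℕ} (hk : 6 ≤ k) (b : ℕ) (hb : b = 1 ∨ b = 2 ∨ b = 3 ∨ b = 4) :
    #((univ : Finset (YT k)).filter (fun c => colBlk k c = b)) = k - 2 := by
  rw [Finset.card_filter, Fintype.sum_sum_type, Fintype.sum_sum_type, Fintype.sum_sum_type]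
  simp only [colBlk_inl, colBlk_inr1, colBlk_inr2, colBlk_inr3]
  have e1 : (∑ a : Fin (2 * k - 3),
      if (if a.val < k - 2 then 1 else if a.val < 2 * k - 4 then 2 else 3) = b then 1 else 0) =
      #((range (2 * k - 3)).filter (fun n => (if n < k - 2 then 1 else if n < 2 * k - 4 then 2 else 3) = b)) := by
    rw [← card_fin_filter (2 * k - 3) (fun n => (if n < k - 2 then 1 else if n < 2 * k - 4 then 2 else 3) = b), Finset.card_filter]
  have e2 : (∑ a : Fin (2 * k - 5), if (if a.val < k - 3 then 3 else 4) = b then 1 else 0) =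
      #((range (2 * k - 5)).filter (fun n => (if n < k - 3 then 3 else 4) = b)) := by
    rw [← card_fin_filter (2 * k - 5) (fun n => (if n < k - 3 then 3 else 4) = b), Finset.card_filter]
  erw [e1, e2]
  have hb0 : (∑ a : Fin (k - 1), if (0 : ℕ) = b then 1 else 0) = 0 := by
    rw [if_neg (by omega), Finset.sum_const_zero]
  have hb0' : (∑ a : Fin (k + 1), if (0 : ℕ) = b then 1 else 0) = 0 := by
    rw [if_neg (by omega), Finset.sum_const_zero]
  erw [hb0, hb0']
  rcases hb with rfl | rfl | rfl | rfl
  · have c1 : ((range (2 * k - 3)).filter (fun n => (if n < k - 2 then 1 else if n < 2 * k - 4 then 2 else 3) = 1)) = range (k - 2) := by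
      ext n; simp only [mem_filter, mem_range]; split_ifs <;> omega
    have c2 : ((range (2 * k - 5)).filter (fun n => (if n < k - 3 then 3 else 4) = 1)) = (∅ : Finset ℕ) := by
      ext n; simp only [mem_filter, mem_range, notMem_empty, iff_false]; split_ifs <;> omega
    rw [c1, c2, card_range, card_empty]; omega
  · have c1 : ((range (2 * k - 3)).filter (fun n => (if n < k - 2 then 1 else if n < 2 * k - 4 then 2 else 3) = 2)) = Finset.Ico (k - 2) (2 * k - 4) := by
      ext n; simp only [mem_filter, mem_range, mem_Ico]; split_ifs <;> omega
    have c2 : ((range (2 * k - 5)).filter (fun n => (if n < k - 3 then 3 else 4) = 2)) = (∅ : Finset ℕ) := by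
      ext n; simp only [mem_filter, mem_range, notMem_empty, iff_false]; split_ifs <;> omega
    rw [c1, c2, Nat.card_Ico, card_empty]; omega
  · have c1 : ((range (2 * k - 3)).filter (fun n => (if n < k - 2 then 1 else if n < 2 * k - 4 then 2 else 3) = 3)) = Finset.Ico (2 * k - 4) (2 * k - 3) := by
      ext n; simp only [mem_filter, mem_range, mem_Ico]; split_ifs <;> omega
    have c2 : ((range (2 * k - 5)).filter (fun n => (if n < k - 3 then 3 else 4) = 3)) = range (k - 3) := by
      ext n; simp only [mem_filter, mem_range]; split_ifs <;> omega
    rw [c1, c2, Nat.card_Ico, card_range]; omega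
  · have c1 : ((range (2 * k - 3)).filter (fun n => (if n < k - 2 then 1 else if n < 2 * k - 4 then 2 else 3) = 4)) = (∅ : Finset ℕ) := by
      ext n; simp only [mem_filter, mem_range, notMem_empty, iff_false]; split_ifs <;> omega
    have c2 : ((range (2 * k - 5)).filter (fun n => (if n < k - 3 then 3 else 4) = 4)) = Finset.Ico (k - 3) (2 * k - 5) := by
      ext n; simp only [mem_filter, mem_range, mem_Ico]; split_ifs <;> omega
    rw [c1, c2, card_empty, Nat.card_Ico]; omega

section Adj
variable {k : ℕ} (H1 : SimpleGraph (Fin (2 * k - 3))) (H2 : SimpleGraph (Fin (2 * k - 5)))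
  (m : ℕ → ℕ)

local notation "G" => SimpleGraph.fromRel (edgeRel k H1 H2 m)

lemma adj_11 (x x' : Fin (2 * k)) :
    (G).Adj (Sum.inl x) (Sum.inl x') ↔ x ≠ x' ∧ LRel k x x' := by
  rw [SimpleGraph.fromRel_adj]
  constructor
  · rintro ⟨h1, h2⟩
    refine ⟨fun h => h1 (by rw [h]), ?_⟩
    rcases h2 with h | h
    · exact h
    · exact (lrel_symm x x').2 h
  · rintro ⟨h1, h2⟩
    exact ⟨fun h => h1 (Sum.inl.inj h), Or.inl h2⟩

lemma adj_12 (x x' : Fin (2 * k)) :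
    (G).Adj (Sum.inl x) (Sum.inr (Sum.inl x')) ↔ LRel k x x' := by
  rw [SimpleGraph.fromRel_adj]
  constructor
  · rintro ⟨-, h | h⟩
    · exact h
    · exact (h : False).elim
  · intro h; exact ⟨fun h' => Sum.inl_ne_inr h', Or.inl h⟩

lemma adj_13 (x : Fin (2 * k)) (c : YT k) :
    (G).Adj (Sum.inl x) (Sum.inr (Sum.inr c)) ↔
      colBlk k c ≠ 0 ∧ m (colBlk k c) = (if x.val < k then 1 else 2) := by
  rw [SimpleGraph.fromRel_adj]
  constructor
  · rintro ⟨-, h | h⟩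
    · exact h
    · exact (h : False).elim
  · intro h; exact ⟨fun h' => Sum.inl_ne_inr h', Or.inl h⟩

lemma adj_22 (x x' : Fin (2 * k)) :
    (G).Adj (Sum.inr (Sum.inl x)) (Sum.inr (Sum.inl x')) ↔ x ≠ x' ∧ LRel k x x' := by
  rw [SimpleGraph.fromRel_adj]
  constructor
  · rintro ⟨h1, h2⟩
    refine ⟨fun h => h1 (by rw [h]), ?_⟩
    rcases h2 with h | h
    · exact h
    · exact (lrel_symm x x').2 h
  · rintro ⟨h1, h2⟩
    refine ⟨fun h => h1 ?_, Or.inl h2⟩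
    rw [Sum.inl.inj (Sum.inr.inj h)]

lemma adj_23 (x : Fin (2 * k)) (c : YT k) :
    (G).Adj (Sum.inr (Sum.inl x)) (Sum.inr (Sum.inr c)) ↔
      colBlk k c ≠ 0 ∧ m (colBlk k c) = (if x.val < k then 3 else 4) := by
  rw [SimpleGraph.fromRel_adj]
  constructor
  · rintro ⟨-, h | h⟩
    · exact h
    · exact (h : False).elim
  · intro h; refine ⟨fun h' => ?_, Or.inl h⟩
    exact Sum.inl_ne_inr (Sum.inr_injective h')

lemma adj_33 (c c' : YT k) :
    (G).Adj (Sum.inr (Sum.inr c)) (Sum.inr (Sum.inr c')) ↔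
      c ≠ c' ∧ (yRel k H1 H2 c c' ∨ yRel k H1 H2 c' c) := by
  rw [SimpleGraph.fromRel_adj]
  constructor
  · rintro ⟨h1, h2⟩
    exact ⟨fun h => h1 (by rw [h]), h2⟩
  · rintro ⟨h1, h2⟩
    exact ⟨fun h => h1 (Sum.inr.inj (Sum.inr.inj h)), h2⟩

lemma adj_21 (x x' : Fin (2 * k)) :
    (G).Adj (Sum.inr (Sum.inl x)) (Sum.inl x') ↔ LRel k x' x :=
  (SimpleGraph.adj_comm _ _ _).trans (adj_12 H1 H2 m x' x)

lemma adj_31 (c : YT k) (x : Fin (2 * k)) :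
    (G).Adj (Sum.inr (Sum.inr c)) (Sum.inl x) ↔
      colBlk k c ≠ 0 ∧ m (colBlk k c) = (if x.val < k then 1 else 2) :=
  (SimpleGraph.adj_comm _ _ _).trans (adj_13 H1 H2 m x c)

lemma adj_32 (c : YT k) (x : Fin (2 * k)) :
    (G).Adj (Sum.inr (Sum.inr c)) (Sum.inr (Sum.inl x)) ↔
      colBlk k c ≠ 0 ∧ m (colBlk k c) = (if x.val < k then 3 else 4) :=
  (SimpleGraph.adj_comm _ _ _).trans (adj_23 H1 H2 m x c)

end Adj

lemma ncard_adj {V : Type*} [Fintype V] (G : SimpleGraph V) (v : V) :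
    (G.neighborSet v).ncard = #((univ : Finset V).filter (fun w => G.Adj v w)) := by
  classical
  rw [Set.ncard_eq_toFinset_card']
  congr 1
  ext w
  simp [SimpleGraph.neighborSet]
  exact Set.mem_toFinset

lemma count_ne {n : ℕ} (a : Fin n) :
    #((univ : Finset (Fin n)).filter (fun b => ¬ a = b)) = n - 1 := by
  have h : (univ : Finset (Fin n)).filter (fun b => ¬ a = b) = univ.erase a := by
    ext b; simp only [mem_filter, mem_univ, true_and, mem_erase, ne_eq]
    exact ⟨fun h => ⟨fun h' => h h'.symm, trivial⟩, fun h h' => h.1 h'.symm⟩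
  rw [h, card_erase_of_mem (mem_univ a), card_univ, Fintype.card_fin]

section YRel
variable {k : ℕ} (H1 : SimpleGraph (Fin (2 * k - 3))) (H2 : SimpleGraph (Fin (2 * k - 5)))

lemma y11 (a b) : yRel k H1 H2 (Sum.inl a) (Sum.inl b) = H1.Adj a b := rfl
lemma y12 (a b) : yRel k H1 H2 (Sum.inl a) (Sum.inr (Sum.inl b)) = False := rfl
lemma y13 (a b) : yRel k H1 H2 (Sum.inl a) (Sum.inr (Sum.inr (Sum.inl b))) = True := rfl
lemma y14 (a b) : yRel k H1 H2 (Sum.inl a) (Sum.inr (Sum.inr (Sum.inr b))) = False := rfl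
lemma y21 (a b) : yRel k H1 H2 (Sum.inr (Sum.inl a)) (Sum.inl b) = False := rfl
lemma y22 (a b) : yRel k H1 H2 (Sum.inr (Sum.inl a)) (Sum.inr (Sum.inl b)) = H2.Adj a b := rfl
lemma y23 (a b) : yRel k H1 H2 (Sum.inr (Sum.inl a)) (Sum.inr (Sum.inr (Sum.inl b))) = False := rfl
lemma y24 (a b) : yRel k H1 H2 (Sum.inr (Sum.inl a)) (Sum.inr (Sum.inr (Sum.inr b))) = True := rfl
lemma y31 (a b) : yRel k H1 H2 (Sum.inr (Sum.inr (Sum.inl a))) (Sum.inl b) = False := rfl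
lemma y32 (a b) : yRel k H1 H2 (Sum.inr (Sum.inr (Sum.inl a))) (Sum.inr (Sum.inl b)) = False := rfl
lemma y33 (a b) : yRel k H1 H2 (Sum.inr (Sum.inr (Sum.inl a))) (Sum.inr (Sum.inr (Sum.inl b))) = True := rfl
lemma y34 (a b) : yRel k H1 H2 (Sum.inr (Sum.inr (Sum.inl a))) (Sum.inr (Sum.inr (Sum.inr b))) = False := rfl
lemma y41 (a b) : yRel k H1 H2 (Sum.inr (Sum.inr (Sum.inr a))) (Sum.inl b) = False := rfl
lemma y42 (a b) : yRel k H1 H2 (Sum.inr (Sum.inr (Sum.inr a))) (Sum.inr (Sum.inl b)) = False := rfl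
lemma y43 (a b) : yRel k H1 H2 (Sum.inr (Sum.inr (Sum.inr a))) (Sum.inr (Sum.inr (Sum.inl b))) = False := rfl
lemma y44 (a b) : yRel k H1 H2 (Sum.inr (Sum.inr (Sum.inr a))) (Sum.inr (Sum.inr (Sum.inr b))) = True := rfl

end YRel

lemma lrel_card' {k : ℕ} (hk : 6 ≤ k) (x : Fin (2 * k)) :
    #((univ : Finset (Fin (2 * k))).filter (fun x' => LRel k x' x)) = k - 1 := by
  rw [filter_congr (fun y _ => lrel_symm y x), lrel_card hk]

lemma degree_eq {k : ℕ} (hk : 6 ≤ k)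
    (H1 : SimpleGraph (Fin (2 * k - 3))) (hH1 : IsRegularGraph H1 (k - 4))
    (H2 : SimpleGraph (Fin (2 * k - 5))) (hH2 : IsRegularGraph H2 (k - 6)) (m : ℕ → ℕ)
    (hm1 : ∀ r : ℕ, (r = 1 ∨ r = 2 ∨ r = 3 ∨ r = 4) →
      #((univ : Finset (YT k)).filter (fun c => colBlk k c ≠ 0 ∧ m (colBlk k c) = r)) = k - 2)
    (hm2 : ∀ b : ℕ, (b = 1 ∨ b = 2 ∨ b = 3 ∨ b = 4) → m b = 1 ∨ m b = 2 ∨ m b = 3 ∨ m b = 4) :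
    IsRegularGraph (SimpleGraph.fromRel (edgeRel k H1 H2 m)) (3 * k - 5) := by
  intro v
  rw [ncard_adj, Finset.card_filter]
  rcases v with x | x | c
  · rw [Fintype.sum_sum_type, Fintype.sum_sum_type]
    simp only [adj_11 H1 H2 m, adj_12 H1 H2 m, adj_13 H1 H2 m]
    rw [← Finset.card_filter, ← Finset.card_filter, ← Finset.card_filter,
      lrel_card_ne hk x, lrel_card hk x, hm1 _ (by split_ifs <;> simp)]
    omega
  · rw [Fintype.sum_sum_type, Fintype.sum_sum_type]
    simp only [adj_21 H1 H2 m, adj_22 H1 H2 m, adj_23 H1 H2 m]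
    rw [← Finset.card_filter, ← Finset.card_filter, ← Finset.card_filter,
      lrel_card' hk x, lrel_card_ne hk x, hm1 _ (by split_ifs <;> simp)]
    omega
  · rw [Fintype.sum_sum_type, Fintype.sum_sum_type, Fintype.sum_sum_type,
      Fintype.sum_sum_type, Fintype.sum_sum_type]
    simp only [adj_31 H1 H2 m, adj_32 H1 H2 m, adj_33 H1 H2 m]
    have hSX : (∑ x : Fin (2 * k),
          (if colBlk k c ≠ 0 ∧ m (colBlk k c) = (if x.val < k then 1 else 2) then 1 else 0)) +
        (∑ x : Fin (2 * k),
          (if colBlk k c ≠ 0 ∧ m (colBlk k c) = (if x.val < k then 3 else 4) then 1 else 0)) =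
        (if colBlk k c = 0 then 0 else k) := by
      by_cases h0 : colBlk k c = 0
      · simp [h0]
      · rw [if_neg h0]
        set mv := m (colBlk k c) with hmv
        have key : ∀ (r1 r2 : ℕ), r1 ≠ r2 →
            (∑ x : Fin (2 * k), (if colBlk k c ≠ 0 ∧ mv = (if x.val < k then r1 else r2) then 1 else 0)) =
            (if mv = r1 then k else 0) + (if mv = r2 then k else 0) := by
          intro r1 r2 hr
          by_cases h1 : mv = r1
          · have : ∀ x : Fin (2 * k),
                (colBlk k c ≠ 0 ∧ mv = (if x.val < k then r1 else r2)) ↔ x.val < k := by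
              intro x; split_ifs with h <;> simp [h0, h1, hr, h] <;> omega
            rw [Finset.sum_congr rfl (fun x _ => by rw [if_congr (this x) rfl rfl]),
              ← Finset.card_filter, count_rho1 hk]
            rw [if_pos h1, if_neg (fun h => hr (h1.symm.trans h))]; omega
          · by_cases h2 : mv = r2
            · have : ∀ x : Fin (2 * k),
                  (colBlk k c ≠ 0 ∧ mv = (if x.val < k then r1 else r2)) ↔ ¬ x.val < k := by
                intro x; split_ifs with h <;> simp [h0, h1, h2, h, Ne.symm hr]
              rw [Finset.sum_congr rfl (fun x _ => by rw [if_congr (this x) rfl rfl]),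
                ← Finset.card_filter, count_rho2 hk]
              rw [if_neg h1, if_pos h2]; omega
            · have : ∀ x : Fin (2 * k),
                  (colBlk k c ≠ 0 ∧ mv = (if x.val < k then r1 else r2)) ↔ False := by
                intro x; split_ifs with h <;> simp [h0, h1, h2, h]
              rw [Finset.sum_congr rfl (fun x _ => by rw [if_congr (this x) rfl rfl])]
              simp [h1, h2]
        rw [key 1 2 (by omega), key 3 4 (by omega)]
        have hmv4 : mv = 1 ∨ mv = 2 ∨ mv = 3 ∨ mv = 4 := by
          rcases colBlk_cases c with h | h | h | h | h
          · exact absurd h h0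
          all_goals rw [hmv, h]
          exacts [hm2 1 (by norm_num), hm2 2 (by norm_num), hm2 3 (by norm_num),
            hm2 4 (by norm_num)]
        rcases hmv4 with h | h | h | h <;> rw [h] <;> norm_num
    rcases c with a | a | a | a
    · have hne : colBlk k (Sum.inl a : YT k) ≠ 0 := by
        rw [colBlk_inl]; split_ifs <;> omega
      rw [if_neg hne] at hSX
      have hT1 : (∑ b : Fin (2 * k - 3), if (Sum.inl a : YT k) ≠ Sum.inl b ∧
          (yRel k H1 H2 (Sum.inl a) (Sum.inl b) ∨ yRel k H1 H2 (Sum.inl b) (Sum.inl a))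
          then 1 else 0) = k - 4 := by
        have hiff : ∀ b : Fin (2 * k - 3), ((Sum.inl a : YT k) ≠ Sum.inl b ∧
            (yRel k H1 H2 (Sum.inl a) (Sum.inl b) ∨ yRel k H1 H2 (Sum.inl b) (Sum.inl a))) ↔
            H1.Adj a b := by
          intro b
          rw [y11, y11]
          constructor
          · rintro ⟨-, h | h⟩
            · exact h
            · exact h.symm
          · intro h; exact ⟨fun he => H1.loopless.irrefl a (by rw [Sum.inl.inj he] at h ⊢; exact h),
              Or.inl h⟩
        rw [Finset.sum_congr rfl (fun b _ => if_congr (hiff b) rfl rfl), ← Finset.card_filter]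
        have := hH1 a
        rw [ncard_adj] at this
        exact this
      have hT2 : (∑ b : Fin (2 * k - 5), if (Sum.inl a : YT k) ≠ Sum.inr (Sum.inl b) ∧
          (yRel k H1 H2 (Sum.inl a) (Sum.inr (Sum.inl b)) ∨
            yRel k H1 H2 (Sum.inr (Sum.inl b)) (Sum.inl a)) then 1 else 0) = 0 := by
        simp [y12, y21]
      have hT3 : (∑ b : Fin (k - 1), if (Sum.inl a : YT k) ≠ Sum.inr (Sum.inr (Sum.inl b)) ∧
          (yRel k H1 H2 (Sum.inl a) (Sum.inr (Sum.inr (Sum.inl b))) ∨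
            yRel k H1 H2 (Sum.inr (Sum.inr (Sum.inl b))) (Sum.inl a)) then 1 else 0) = k - 1 := by
        simp [y13, y31]
      have hT4 : (∑ b : Fin (k + 1), if (Sum.inl a : YT k) ≠ Sum.inr (Sum.inr (Sum.inr b)) ∧
          (yRel k H1 H2 (Sum.inl a) (Sum.inr (Sum.inr (Sum.inr b))) ∨
            yRel k H1 H2 (Sum.inr (Sum.inr (Sum.inr b))) (Sum.inl a)) then 1 else 0) = 0 := by
        simp [y14, y41]
      rw [hT1, hT2, hT3, hT4]
      omega
    · have hne : colBlk k (Sum.inr (Sum.inl a) : YT k) ≠ 0 := by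
        rw [colBlk_inr1]; split_ifs <;> omega
      rw [if_neg hne] at hSX
      have hT1 : (∑ b : Fin (2 * k - 3), if (Sum.inr (Sum.inl a) : YT k) ≠ Sum.inl b ∧
          (yRel k H1 H2 (Sum.inr (Sum.inl a)) (Sum.inl b) ∨
            yRel k H1 H2 (Sum.inl b) (Sum.inr (Sum.inl a))) then 1 else 0) = 0 := by
        simp [y21, y12]
      have hT2 : (∑ b : Fin (2 * k - 5), if (Sum.inr (Sum.inl a) : YT k) ≠ Sum.inr (Sum.inl b) ∧
          (yRel k H1 H2 (Sum.inr (Sum.inl a)) (Sum.inr (Sum.inl b)) ∨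
            yRel k H1 H2 (Sum.inr (Sum.inl b)) (Sum.inr (Sum.inl a))) then 1 else 0) = k - 6 := by
        have hiff : ∀ b : Fin (2 * k - 5), ((Sum.inr (Sum.inl a) : YT k) ≠ Sum.inr (Sum.inl b) ∧
            (yRel k H1 H2 (Sum.inr (Sum.inl a)) (Sum.inr (Sum.inl b)) ∨
              yRel k H1 H2 (Sum.inr (Sum.inl b)) (Sum.inr (Sum.inl a)))) ↔ H2.Adj a b := by
          intro b
          rw [y22, y22]
          constructor
          · rintro ⟨-, h | h⟩
            · exact h
            · exact h.symm
          · intro h; exact ⟨fun he => H2.loopless.irrefl a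
              (by rw [Sum.inl.inj (Sum.inr.inj he)] at h ⊢; exact h), Or.inl h⟩
        rw [Finset.sum_congr rfl (fun b _ => if_congr (hiff b) rfl rfl), ← Finset.card_filter]
        have := hH2 a
        rw [ncard_adj] at this
        exact this
      have hT3 : (∑ b : Fin (k - 1), if (Sum.inr (Sum.inl a) : YT k) ≠ Sum.inr (Sum.inr (Sum.inl b)) ∧
          (yRel k H1 H2 (Sum.inr (Sum.inl a)) (Sum.inr (Sum.inr (Sum.inl b))) ∨
            yRel k H1 H2 (Sum.inr (Sum.inr (Sum.inl b))) (Sum.inr (Sum.inl a))) then 1 else 0) = 0 := by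
        simp [y23, y32]
      have hT4 : (∑ b : Fin (k + 1), if (Sum.inr (Sum.inl a) : YT k) ≠ Sum.inr (Sum.inr (Sum.inr b)) ∧
          (yRel k H1 H2 (Sum.inr (Sum.inl a)) (Sum.inr (Sum.inr (Sum.inr b))) ∨
            yRel k H1 H2 (Sum.inr (Sum.inr (Sum.inr b))) (Sum.inr (Sum.inl a))) then 1 else 0) = k + 1 := by
        simp [y24, y42]
      rw [hT1, hT2, hT3, hT4]
      omega
    · have hz : colBlk k (Sum.inr (Sum.inr (Sum.inl a)) : YT k) = 0 := colBlk_inr2 a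
      rw [if_pos hz] at hSX
      have hT1 : (∑ b : Fin (2 * k - 3), if (Sum.inr (Sum.inr (Sum.inl a)) : YT k) ≠ Sum.inl b ∧
          (yRel k H1 H2 (Sum.inr (Sum.inr (Sum.inl a))) (Sum.inl b) ∨
            yRel k H1 H2 (Sum.inl b) (Sum.inr (Sum.inr (Sum.inl a)))) then 1 else 0) = 2 * k - 3 := by
        simp [y31, y13]
      have hT2 : (∑ b : Fin (2 * k - 5), if (Sum.inr (Sum.inr (Sum.inl a)) : YT k) ≠ Sum.inr (Sum.inl b) ∧
          (yRel k H1 H2 (Sum.inr (Sum.inr (Sum.inl a))) (Sum.inr (Sum.inl b)) ∨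
            yRel k H1 H2 (Sum.inr (Sum.inl b)) (Sum.inr (Sum.inr (Sum.inl a)))) then 1 else 0) = 0 := by
        simp [y32, y23]
      have hT3 : (∑ b : Fin (k - 1), if (Sum.inr (Sum.inr (Sum.inl a)) : YT k) ≠ Sum.inr (Sum.inr (Sum.inl b)) ∧
          (yRel k H1 H2 (Sum.inr (Sum.inr (Sum.inl a))) (Sum.inr (Sum.inr (Sum.inl b))) ∨
            yRel k H1 H2 (Sum.inr (Sum.inr (Sum.inl b))) (Sum.inr (Sum.inr (Sum.inl a)))) then 1 else 0) = k - 2 := by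
        have hiff : ∀ b : Fin (k - 1), ((Sum.inr (Sum.inr (Sum.inl a)) : YT k) ≠ Sum.inr (Sum.inr (Sum.inl b)) ∧
            (yRel k H1 H2 (Sum.inr (Sum.inr (Sum.inl a))) (Sum.inr (Sum.inr (Sum.inl b))) ∨
              yRel k H1 H2 (Sum.inr (Sum.inr (Sum.inl b))) (Sum.inr (Sum.inr (Sum.inl a))))) ↔
            ¬ a = b := by
          intro b
          rw [y33, y33]
          constructor
          · rintro ⟨h, -⟩; exact fun he => h (by rw [he])
          · intro h; exact ⟨fun he => h (Sum.inl.inj (Sum.inr.inj (Sum.inr.inj he))), Or.inl trivial⟩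
        rw [Finset.sum_congr rfl (fun b _ => if_congr (hiff b) rfl rfl), ← Finset.card_filter,
          count_ne]
        omega
      have hT4 : (∑ b : Fin (k + 1), if (Sum.inr (Sum.inr (Sum.inl a)) : YT k) ≠ Sum.inr (Sum.inr (Sum.inr b)) ∧
          (yRel k H1 H2 (Sum.inr (Sum.inr (Sum.inl a))) (Sum.inr (Sum.inr (Sum.inr b))) ∨
            yRel k H1 H2 (Sum.inr (Sum.inr (Sum.inr b))) (Sum.inr (Sum.inr (Sum.inl a)))) then 1 else 0) = 0 := by
        simp [y34, y43]
      rw [hT1, hT2, hT3, hT4]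
      omega
    · have hz : colBlk k (Sum.inr (Sum.inr (Sum.inr a)) : YT k) = 0 := colBlk_inr3 a
      rw [if_pos hz] at hSX
      have hT1 : (∑ b : Fin (2 * k - 3), if (Sum.inr (Sum.inr (Sum.inr a)) : YT k) ≠ Sum.inl b ∧
          (yRel k H1 H2 (Sum.inr (Sum.inr (Sum.inr a))) (Sum.inl b) ∨
            yRel k H1 H2 (Sum.inl b) (Sum.inr (Sum.inr (Sum.inr a)))) then 1 else 0) = 0 := by
        simp [y41, y14]
      have hT2 : (∑ b : Fin (2 * k - 5), if (Sum.inr (Sum.inr (Sum.inr a)) : YT k) ≠ Sum.inr (Sum.inl b) ∧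
          (yRel k H1 H2 (Sum.inr (Sum.inr (Sum.inr a))) (Sum.inr (Sum.inl b)) ∨
            yRel k H1 H2 (Sum.inr (Sum.inl b)) (Sum.inr (Sum.inr (Sum.inr a)))) then 1 else 0) = 2 * k - 5 := by
        simp [y42, y24]
      have hT3 : (∑ b : Fin (k - 1), if (Sum.inr (Sum.inr (Sum.inr a)) : YT k) ≠ Sum.inr (Sum.inr (Sum.inl b)) ∧
          (yRel k H1 H2 (Sum.inr (Sum.inr (Sum.inr a))) (Sum.inr (Sum.inr (Sum.inl b))) ∨
            yRel k H1 H2 (Sum.inr (Sum.inr (Sum.inl b))) (Sum.inr (Sum.inr (Sum.inr a)))) then 1 else 0) = 0 := by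
        simp [y43, y34]
      have hT4 : (∑ b : Fin (k + 1), if (Sum.inr (Sum.inr (Sum.inr a)) : YT k) ≠ Sum.inr (Sum.inr (Sum.inr b)) ∧
          (yRel k H1 H2 (Sum.inr (Sum.inr (Sum.inr a))) (Sum.inr (Sum.inr (Sum.inr b))) ∨
            yRel k H1 H2 (Sum.inr (Sum.inr (Sum.inr b))) (Sum.inr (Sum.inr (Sum.inr a)))) then 1 else 0) = k := by
        have hiff : ∀ b : Fin (k + 1), ((Sum.inr (Sum.inr (Sum.inr a)) : YT k) ≠ Sum.inr (Sum.inr (Sum.inr b)) ∧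
            (yRel k H1 H2 (Sum.inr (Sum.inr (Sum.inr a))) (Sum.inr (Sum.inr (Sum.inr b))) ∨
              yRel k H1 H2 (Sum.inr (Sum.inr (Sum.inr b))) (Sum.inr (Sum.inr (Sum.inr a))))) ↔
            ¬ a = b := by
          intro b
          rw [y44, y44]
          constructor
          · rintro ⟨h, -⟩; exact fun he => h (by rw [he])
          · intro h; exact ⟨fun he => h (Sum.inr.inj (Sum.inr.inj (Sum.inr.inj he))), Or.inl trivial⟩
        rw [Finset.sum_congr rfl (fun b _ => if_congr (hiff b) rfl rfl), ← Finset.card_filter,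
          count_ne]
        omega
      rw [hT1, hT2, hT3, hT4]
      omega

lemma hm1_G {k : ℕ} (hk : 6 ≤ k) : ∀ r : ℕ, (r = 1 ∨ r = 2 ∨ r = 3 ∨ r = 4) →
    #((univ : Finset (YT k)).filter
      (fun c => colBlk k c ≠ 0 ∧ mrowGamma (colBlk k c) = r)) = k - 2 := by
  intro r hr
  rcases hr with rfl | rfl | rfl | rfl
  · rw [show (univ : Finset (YT k)).filter (fun c => colBlk k c ≠ 0 ∧ mrowGamma (colBlk k c) = 1)
        = (univ : Finset (YT k)).filter (fun c => colBlk k c = 2) from filter_congr (fun c _ => by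
      rcases colBlk_cases c with h | h | h | h | h <;> rw [h] <;> norm_num [mrowGamma])]
    exact colBlk_count hk 2 (by norm_num)
  · rw [show (univ : Finset (YT k)).filter (fun c => colBlk k c ≠ 0 ∧ mrowGamma (colBlk k c) = 2)
        = (univ : Finset (YT k)).filter (fun c => colBlk k c = 3) from filter_congr (fun c _ => by
      rcases colBlk_cases c with h | h | h | h | h <;> rw [h] <;> norm_num [mrowGamma])]
    exact colBlk_count hk 3 (by norm_num)
  · rw [show (univ : Finset (YT k)).filter (fun c => colBlk k c ≠ 0 ∧ mrowGamma (colBlk k c) = 3)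
        = (univ : Finset (YT k)).filter (fun c => colBlk k c = 1) from filter_congr (fun c _ => by
      rcases colBlk_cases c with h | h | h | h | h <;> rw [h] <;> norm_num [mrowGamma])]
    exact colBlk_count hk 1 (by norm_num)
  · rw [show (univ : Finset (YT k)).filter (fun c => colBlk k c ≠ 0 ∧ mrowGamma (colBlk k c) = 4)
        = (univ : Finset (YT k)).filter (fun c => colBlk k c = 4) from filter_congr (fun c _ => by
      rcases colBlk_cases c with h | h | h | h | h <;> rw [h] <;> norm_num [mrowGamma])]
    exact colBlk_count hk 4 (by norm_num)

lemma hm1_G' {k : ℕ} (hk : 6 ≤ k) : ∀ r : ℕ, (r = 1 ∨ r = 2 ∨ r = 3 ∨ r = 4) →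
    #((univ : Finset (YT k)).filter
      (fun c => colBlk k c ≠ 0 ∧ mrowGamma' (colBlk k c) = r)) = k - 2 := by
  intro r hr
  rcases hr with rfl | rfl | rfl | rfl
  · rw [show (univ : Finset (YT k)).filter (fun c => colBlk k c ≠ 0 ∧ mrowGamma' (colBlk k c) = 1)
        = (univ : Finset (YT k)).filter (fun c => colBlk k c = 3) from filter_congr (fun c _ => by
      rcases colBlk_cases c with h | h | h | h | h <;> rw [h] <;> norm_num [mrowGamma'])]
    exact colBlk_count hk 3 (by norm_num)
  · rw [show (univ : Finset (YT k)).filter (fun c => colBlk k c ≠ 0 ∧ mrowGamma' (colBlk k c) = 2)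
        = (univ : Finset (YT k)).filter (fun c => colBlk k c = 2) from filter_congr (fun c _ => by
      rcases colBlk_cases c with h | h | h | h | h <;> rw [h] <;> norm_num [mrowGamma'])]
    exact colBlk_count hk 2 (by norm_num)
  · rw [show (univ : Finset (YT k)).filter (fun c => colBlk k c ≠ 0 ∧ mrowGamma' (colBlk k c) = 3)
        = (univ : Finset (YT k)).filter (fun c => colBlk k c = 4) from filter_congr (fun c _ => by
      rcases colBlk_cases c with h | h | h | h | h <;> rw [h] <;> norm_num [mrowGamma'])]
    exact colBlk_count hk 4 (by norm_num)
  · rw [show (univ : Finset (YT k)).filter (fun c => colBlk k c ≠ 0 ∧ mrowGamma' (colBlk k c) = 4)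
        = (univ : Finset (YT k)).filter (fun c => colBlk k c = 1) from filter_congr (fun c _ => by
      rcases colBlk_cases c with h | h | h | h | h <;> rw [h] <;> norm_num [mrowGamma'])]
    exact colBlk_count hk 1 (by norm_num)

lemma hm2_G : ∀ b : ℕ, (b = 1 ∨ b = 2 ∨ b = 3 ∨ b = 4) →
    mrowGamma b = 1 ∨ mrowGamma b = 2 ∨ mrowGamma b = 3 ∨ mrowGamma b = 4 := by
  intro b hb; rcases hb with rfl | rfl | rfl | rfl <;> norm_num [mrowGamma]

lemma hm2_G' : ∀ b : ℕ, (b = 1 ∨ b = 2 ∨ b = 3 ∨ b = 4) →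
    mrowGamma' b = 1 ∨ mrowGamma' b = 2 ∨ mrowGamma' b = 3 ∨ mrowGamma' b = 4 := by
  intro b hb; rcases hb with rfl | rfl | rfl | rfl <;> norm_num [mrowGamma']

lemma card_VE {k : ℕ} (hk : 6 ≤ k) : Fintype.card (VE k) = 10 * k - 8 := by
  simp only [Fintype.card_sum, Fintype.card_fin]
  omega

set_option synthInstance.maxSize 1024

open Matrix Polynomial

noncomputable def qmat (k : ℕ) : Matrix (Fin (2 * k)) (Fin (2 * k)) ℚ :=
  Matrix.of fun x y => (k : ℚ)⁻¹ - if x = y then 1 else 0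

noncomputable def A1m (k : ℕ) : Matrix (Fin (2 * k)) (Fin (2 * k)) ℚ :=
  Matrix.of fun x y => if x ≠ y ∧ LRel k x y then 1 else 0

noncomputable def Lmq (k : ℕ) : Matrix (Fin (2 * k)) (Fin (2 * k)) ℚ :=
  Matrix.of fun x y => if LRel k x y then 1 else 0

noncomputable def Mgen (k : ℕ) (m : ℕ → ℕ) (r1 r2 : ℕ) : Matrix (Fin (2 * k)) (YT k) ℚ :=
  Matrix.of fun x c =>
    if colBlk k c ≠ 0 ∧ m (colBlk k c) = (if x.val < k then r1 else r2) then 1 else 0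

noncomputable def Bmq (k : ℕ) (H1 : SimpleGraph (Fin (2 * k - 3)))
    (H2 : SimpleGraph (Fin (2 * k - 5))) : Matrix (YT k) (YT k) ℚ :=
  Matrix.of fun c c' =>
    if c ≠ c' ∧ (yRel k H1 H2 c c' ∨ yRel k H1 H2 c' c) then 1 else 0

noncomputable def Qblk (k : ℕ) : Matrix (VE k) (VE k) ℚ :=
  fromBlocks (qmat k) 0 0 (fromBlocks (qmat k) 0 0 (1 : Matrix (YT k) (YT k) ℚ))

noncomputable def Av (k : ℕ) (H1 : SimpleGraph (Fin (2 * k - 3)))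
    (H2 : SimpleGraph (Fin (2 * k - 5))) (m : ℕ → ℕ) : Matrix (VE k) (VE k) ℚ :=
  fromBlocks (A1m k) (fromCols (Lmq k) (Mgen k m 1 2))
    (fromRows (Lmq k) (Mgen k m 1 2)ᵀ)
    (fromBlocks (A1m k) (Mgen k m 3 4) (Mgen k m 3 4)ᵀ (Bmq k H1 H2))

section QmLemmas
variable {k : ℕ}

lemma sum_qmat_mul (f : Fin (2 * k) → ℚ) (x : Fin (2 * k)) :
    ∑ z, qmat k x z * f z = (k : ℚ)⁻¹ * ∑ z, f z - f x := by
  simp only [qmat, Matrix.of_apply, sub_mul, ite_mul, one_mul, zero_mul]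
  rw [Finset.sum_sub_distrib, Finset.sum_ite_eq, ← Finset.mul_sum]
  simp

lemma sum_mul_qmat (f : Fin (2 * k) → ℚ) (y : Fin (2 * k)) :
    ∑ z, f z * qmat k z y = (k : ℚ)⁻¹ * ∑ z, f z - f y := by
  simp only [qmat, Matrix.of_apply, mul_sub, mul_ite, mul_one, mul_zero]
  rw [Finset.sum_sub_distrib, Finset.sum_ite_eq', ← Finset.sum_mul]
  simp [mul_comm]

lemma qmat_symm (x y : Fin (2 * k)) : qmat k x y = qmat k y x := by
  simp [qmat, eq_comm]

lemma sum_qmat_row (hk : 6 ≤ k) (x : Fin (2 * k)) : ∑ z, qmat k x z = 1 := by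
  have hk0 : (k : ℚ) ≠ 0 := Nat.cast_ne_zero.mpr (by omega)
  simp only [qmat, Matrix.of_apply]
  rw [Finset.sum_sub_distrib]
  simp only [Finset.sum_const, Finset.card_univ, Fintype.card_fin, nsmul_eq_mul,
    Finset.sum_ite_eq, Finset.mem_univ, if_true]
  push_cast
  field_simp
  ring

lemma sum_qmat_col (hk : 6 ≤ k) (y : Fin (2 * k)) : ∑ z, qmat k z y = 1 := by
  rw [Finset.sum_congr rfl (fun z _ => qmat_symm z y), sum_qmat_row hk]

lemma qmat_sq (hk : 6 ≤ k) : qmat k * qmat k = 1 := by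
  ext x y
  rw [Matrix.mul_apply, sum_qmat_mul (fun z => qmat k z y) x, sum_qmat_col hk, mul_one,
    Matrix.one_apply]
  simp only [qmat, Matrix.of_apply]
  ring

lemma Qblk_sq (hk : 6 ≤ k) : Qblk k * Qblk k = (1 : Matrix (VE k) (VE k) ℚ) := by
  unfold Qblk
  rw [Matrix.fromBlocks_multiply, Matrix.fromBlocks_multiply]
  simp only [Matrix.mul_zero, Matrix.zero_mul, add_zero, zero_add, Matrix.mul_one,
    qmat_sq hk, Matrix.fromBlocks_one]

lemma charpoly_conj {n : Type*} [Fintype n] [DecidableEq n] (Q M M' : Matrix n n ℚ)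
    (hQ : Q * Q = 1) (h : Q * M = M' * Q) : M.charpoly = M'.charpoly := by
  have hM' : M' = Q * M * Q := by
    calc M' = M' * (Q * Q) := by rw [hQ, mul_one]
    _ = (M' * Q) * Q := by rw [mul_assoc]
    _ = (Q * M) * Q := by rw [h]
  subst hM'
  unfold Matrix.charpoly
  have hcm : ∀ N : Matrix n n ℚ, Matrix.charmatrix N =
      (Polynomial.X : ℚ[X]) • (1 : Matrix n n ℚ[X]) - N.map Polynomial.C := by
    intro N
    ext i j
    rw [Matrix.charmatrix_apply]
    by_cases hij : i = j
    · subst hij; simp [Matrix.one_apply]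
    · simp [Matrix.one_apply, hij, Matrix.diagonal_apply_ne _ hij]
  have hmapmul : ∀ (A B : Matrix n n ℚ),
      (A * B).map (Polynomial.C : ℚ → ℚ[X]) = A.map Polynomial.C * B.map Polynomial.C := by
    intro A B
    exact Matrix.map_mul (f := (Polynomial.C : ℚ →+* ℚ[X]))
  have hQc : Q.map (Polynomial.C : ℚ → ℚ[X]) * Q.map Polynomial.C = 1 := by
    rw [← hmapmul, hQ]
    ext i j
    by_cases hij : i = j
    · subst hij; simp [Matrix.one_apply]
    · simp [Matrix.one_apply, hij]
  have hkey : Matrix.charmatrix (Q * M * Q) =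
      Q.map Polynomial.C * Matrix.charmatrix M * Q.map Polynomial.C := by
    rw [hcm, hcm, hmapmul, hmapmul]
    rw [Matrix.mul_sub, Matrix.sub_mul]
    congr 1
    rw [Matrix.mul_smul, mul_one, Matrix.smul_mul, hQc]
  rw [hkey, Matrix.det_mul, Matrix.det_mul]
  have hdet : (Q.map (Polynomial.C : ℚ → ℚ[X])).det * (Q.map Polynomial.C).det = 1 := by
    rw [← Matrix.det_mul, hQc, Matrix.det_one]
  calc (Matrix.charmatrix M).det
      = (Matrix.charmatrix M).det *
        ((Q.map Polynomial.C).det * (Q.map Polynomial.C).det) := by rw [hdet, mul_one]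
    _ = (Q.map Polynomial.C).det * (Matrix.charmatrix M).det * (Q.map Polynomial.C).det := by
        ring

end QmLemmas

section Blocks
variable {k : ℕ}

lemma A1m_symm (x y : Fin (2 * k)) : A1m k x y = A1m k y x := by
  simp only [A1m, Matrix.of_apply]
  refine if_congr ?_ rfl rfl
  constructor
  · rintro ⟨h1, h2⟩; exact ⟨h1.symm, (lrel_symm x y).1 h2⟩
  · rintro ⟨h1, h2⟩; exact ⟨h1.symm, (lrel_symm y x).1 h2⟩

lemma Lmq_symm (x y : Fin (2 * k)) : Lmq k x y = Lmq k y x := by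
  simp only [Lmq, Matrix.of_apply]
  exact if_congr (lrel_symm x y) rfl rfl

lemma sum_A1_row (hk : 6 ≤ k) (x : Fin (2 * k)) : ∑ z, A1m k x z = (k : ℚ) - 2 := by
  simp only [A1m, Matrix.of_apply]
  rw [Finset.sum_boole, lrel_card_ne hk x, Nat.cast_sub (by omega), Nat.cast_ofNat]

lemma sum_L_row (hk : 6 ≤ k) (x : Fin (2 * k)) : ∑ z, Lmq k x z = (k : ℚ) - 1 := by
  simp only [Lmq, Matrix.of_apply]
  rw [Finset.sum_boole, lrel_card hk x, Nat.cast_sub (by omega), Nat.cast_one]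

lemma qA1_comm (hk : 6 ≤ k) : qmat k * A1m k = A1m k * qmat k := by
  ext x y
  rw [Matrix.mul_apply, Matrix.mul_apply, sum_qmat_mul (fun z => A1m k z y) x,
    sum_mul_qmat (fun z => A1m k x z) y,
    Finset.sum_congr rfl (fun z _ => A1m_symm z y), sum_A1_row hk y, sum_A1_row hk x]

lemma qL_comm (hk : 6 ≤ k) : qmat k * Lmq k = Lmq k * qmat k := by
  ext x y
  rw [Matrix.mul_apply, Matrix.mul_apply, sum_qmat_mul (fun z => Lmq k z y) x,
    sum_mul_qmat (fun z => Lmq k x z) y,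
    Finset.sum_congr rfl (fun z _ => Lmq_symm z y), sum_L_row hk y, sum_L_row hk x]

lemma qmat_transpose : (qmat k)ᵀ = qmat k := by
  ext x y
  rw [Matrix.transpose_apply]
  exact qmat_symm y x

lemma q_mul_Mgen (hk : 6 ≤ k) (m m' : ℕ → ℕ) (r1 r2 : ℕ) (h12 : r1 ≠ r2)
    (hsw : ∀ b : ℕ, (b = 1 ∨ b = 2 ∨ b = 3 ∨ b = 4) →
      (m b = r1 ∧ m' b = r2) ∨ (m b = r2 ∧ m' b = r1) ∨
        (m b ≠ r1 ∧ m b ≠ r2 ∧ m' b ≠ r1 ∧ m' b ≠ r2)) :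
    qmat k * Mgen k m r1 r2 = Mgen k m' r1 r2 := by
  have hk0 : (k : ℚ) ≠ 0 := Nat.cast_ne_zero.mpr (by omega)
  ext x c
  rw [Matrix.mul_apply, sum_qmat_mul (fun z => Mgen k m r1 r2 z c) x]
  simp only [Mgen, Matrix.of_apply]
  by_cases h0 : colBlk k c = 0
  · simp [h0]
  · have hb : colBlk k c = 1 ∨ colBlk k c = 2 ∨ colBlk k c = 3 ∨ colBlk k c = 4 := by
      rcases colBlk_cases c with h | h | h | h | h
      · exact absurd h h0
      all_goals tauto
    rcases hsw _ hb with ⟨h1, h2⟩ | ⟨h1, h2⟩ | ⟨h1, h2, h3, h4⟩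
    · have hiff : ∀ z : Fin (2 * k), (colBlk k c ≠ 0 ∧
          m (colBlk k c) = (if (z : ℕ) < k then r1 else r2)) ↔ ((z : ℕ) < k) := fun z => by
        split_ifs with hz <;> simp [h0, h1, hz, h12, Ne.symm h12]
      have hiff' : ∀ z : Fin (2 * k), (colBlk k c ≠ 0 ∧
          m' (colBlk k c) = (if (z : ℕ) < k then r1 else r2)) ↔ ¬ ((z : ℕ) < k) := fun z => by
        split_ifs with hz <;> simp [h0, h2, hz, h12, Ne.symm h12]
      simp only [hiff, hiff']
      rw [Finset.sum_boole, count_rho1 hk]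
      by_cases hx : (x : ℕ) < k <;> simp [hx, inv_mul_cancel₀ hk0]
    · have hiff : ∀ z : Fin (2 * k), (colBlk k c ≠ 0 ∧
          m (colBlk k c) = (if (z : ℕ) < k then r1 else r2)) ↔ ¬ ((z : ℕ) < k) := fun z => by
        split_ifs with hz <;> simp [h0, h1, hz, h12, Ne.symm h12]
      have hiff' : ∀ z : Fin (2 * k), (colBlk k c ≠ 0 ∧
          m' (colBlk k c) = (if (z : ℕ) < k then r1 else r2)) ↔ ((z : ℕ) < k) := fun z => by
        split_ifs with hz <;> simp [h0, h2, hz, h12, Ne.symm h12]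
      simp only [hiff, hiff']
      rw [Finset.sum_boole, count_rho2 hk]
      by_cases hx : (x : ℕ) < k <;> simp [hx, inv_mul_cancel₀ hk0]
    · have hiff : ∀ z : Fin (2 * k), (colBlk k c ≠ 0 ∧
          m (colBlk k c) = (if (z : ℕ) < k then r1 else r2)) ↔ False := fun z => by
        split_ifs with hz <;> simp [h0, h1, h2, hz]
      have hiff' : ∀ z : Fin (2 * k), (colBlk k c ≠ 0 ∧
          m' (colBlk k c) = (if (z : ℕ) < k then r1 else r2)) ↔ False := fun z => by
        split_ifs with hz <;> simp [h0, h3, h4, hz]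
      simp only [hiff, hiff']
      simp

end Blocks

section Final
variable {k : ℕ}

lemma adjq_eq_Av (H1 : SimpleGraph (Fin (2 * k - 3))) (H2 : SimpleGraph (Fin (2 * k - 5)))
    (m : ℕ → ℕ) :
    (SimpleGraph.fromRel (edgeRel k H1 H2 m)).adjMatrix ℚ = Av k H1 H2 m := by
  ext i j
  rcases i with x | x | c <;> rcases j with y | y | c'
  · rw [SimpleGraph.adjMatrix_apply,
      show Av k H1 H2 m (Sum.inl x) (Sum.inl y) = (if x ≠ y ∧ LRel k x y then 1 else 0) from rfl]
    exact if_congr (adj_11 H1 H2 m x y) rfl rfl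
  · rw [SimpleGraph.adjMatrix_apply,
      show Av k H1 H2 m (Sum.inl x) (Sum.inr (Sum.inl y)) = (if LRel k x y then 1 else 0)
        from rfl]
    exact if_congr (adj_12 H1 H2 m x y) rfl rfl
  · rw [SimpleGraph.adjMatrix_apply,
      show Av k H1 H2 m (Sum.inl x) (Sum.inr (Sum.inr c')) = (if colBlk k c' ≠ 0 ∧
        m (colBlk k c') = (if (x : ℕ) < k then 1 else 2) then 1 else 0) from rfl]
    exact if_congr (adj_13 H1 H2 m x c') rfl rfl
  · rw [SimpleGraph.adjMatrix_apply,
      show Av k H1 H2 m (Sum.inr (Sum.inl x)) (Sum.inl y) = (if LRel k x y then 1 else 0)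
        from rfl]
    exact if_congr ((adj_21 H1 H2 m x y).trans (lrel_symm y x)) rfl rfl
  · rw [SimpleGraph.adjMatrix_apply,
      show Av k H1 H2 m (Sum.inr (Sum.inl x)) (Sum.inr (Sum.inl y)) =
        (if x ≠ y ∧ LRel k x y then 1 else 0) from rfl]
    exact if_congr (adj_22 H1 H2 m x y) rfl rfl
  · rw [SimpleGraph.adjMatrix_apply,
      show Av k H1 H2 m (Sum.inr (Sum.inl x)) (Sum.inr (Sum.inr c')) = (if colBlk k c' ≠ 0 ∧
        m (colBlk k c') = (if (x : ℕ) < k then 3 else 4) then 1 else 0) from rfl]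
    exact if_congr (adj_23 H1 H2 m x c') rfl rfl
  · rw [SimpleGraph.adjMatrix_apply,
      show Av k H1 H2 m (Sum.inr (Sum.inr c)) (Sum.inl y) = (if colBlk k c ≠ 0 ∧
        m (colBlk k c) = (if (y : ℕ) < k then 1 else 2) then 1 else 0) from rfl]
    exact if_congr (adj_31 H1 H2 m c y) rfl rfl
  · rw [SimpleGraph.adjMatrix_apply,
      show Av k H1 H2 m (Sum.inr (Sum.inr c)) (Sum.inr (Sum.inl y)) = (if colBlk k c ≠ 0 ∧
        m (colBlk k c) = (if (y : ℕ) < k then 3 else 4) then 1 else 0) from rfl]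
    exact if_congr (adj_32 H1 H2 m c y) rfl rfl
  · rw [SimpleGraph.adjMatrix_apply,
      show Av k H1 H2 m (Sum.inr (Sum.inr c)) (Sum.inr (Sum.inr c')) = (if c ≠ c' ∧
        (yRel k H1 H2 c c' ∨ yRel k H1 H2 c' c) then 1 else 0) from rfl]
    exact if_congr (adj_33 H1 H2 m c c') rfl rfl

lemma QA_comm (hk : 6 ≤ k) (H1 : SimpleGraph (Fin (2 * k - 3)))
    (H2 : SimpleGraph (Fin (2 * k - 5))) :
    Qblk k * Av k H1 H2 mrowGamma = Av k H1 H2 mrowGamma' * Qblk k := by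
  have hM1 : qmat k * Mgen k mrowGamma 1 2 = Mgen k mrowGamma' 1 2 :=
    q_mul_Mgen hk _ _ 1 2 (by omega) (by
      intro b hb; rcases hb with rfl | rfl | rfl | rfl <;> norm_num [mrowGamma, mrowGamma'])
  have hM2 : qmat k * Mgen k mrowGamma 3 4 = Mgen k mrowGamma' 3 4 :=
    q_mul_Mgen hk _ _ 3 4 (by omega) (by
      intro b hb; rcases hb with rfl | rfl | rfl | rfl <;> norm_num [mrowGamma, mrowGamma'])
  have hM1' : qmat k * Mgen k mrowGamma' 1 2 = Mgen k mrowGamma 1 2 :=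
    q_mul_Mgen hk _ _ 1 2 (by omega) (by
      intro b hb; rcases hb with rfl | rfl | rfl | rfl <;> norm_num [mrowGamma, mrowGamma'])
  have hM2' : qmat k * Mgen k mrowGamma' 3 4 = Mgen k mrowGamma 3 4 :=
    q_mul_Mgen hk _ _ 3 4 (by omega) (by
      intro b hb; rcases hb with rfl | rfl | rfl | rfl <;> norm_num [mrowGamma, mrowGamma'])
  have hT1 : (Mgen k mrowGamma' 1 2)ᵀ * qmat k = (Mgen k mrowGamma 1 2)ᵀ := by
    rw [← hM1', Matrix.transpose_mul, qmat_transpose]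
  have hT2 : (Mgen k mrowGamma' 3 4)ᵀ * qmat k = (Mgen k mrowGamma 3 4)ᵀ := by
    rw [← hM2', Matrix.transpose_mul, qmat_transpose]
  unfold Av Qblk
  rw [Matrix.fromBlocks_multiply, Matrix.fromBlocks_multiply]
  simp only [Matrix.zero_mul, Matrix.mul_zero, add_zero, zero_add,
    Matrix.mul_fromCols, Matrix.fromBlocks_mul_fromRows,
    Matrix.fromCols_mul_fromBlocks, Matrix.fromRows_mul,
    Matrix.fromBlocks_multiply, Matrix.mul_one, Matrix.one_mul]
  rw [hM1, hM2, hT1, hT2, qA1_comm hk, qL_comm hk]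

end Final

/-- For every even `k ≥ 6` and every `(k-4)`-regular graph `H1` of order
`2k-3` and `(k-6)`-regular graph `H2` of order `2k-5`, the graphs `Γ` and `Γ'` are both
`(3k-5)`-regular graphs of order `10k-8`, and they are cospectral. -/
theorem stmt10 (k : ℕ) (hk : 6 ≤ k) (hke : Even k)
    (H1 : SimpleGraph (Fin (2 * k - 3))) (hH1 : IsRegularGraph H1 (k - 4))
    (H2 : SimpleGraph (Fin (2 * k - 5))) (hH2 : IsRegularGraph H2 (k - 6)) :
    IsRegularGraph (GammaE k H1 H2) (3 * k - 5) ∧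
      IsRegularGraph (GammaE' k H1 H2) (3 * k - 5) ∧
      Fintype.card (VE k) = 10 * k - 8 ∧
      Cospectral (GammaE k H1 H2) (GammaE' k H1 H2) := by
  refine ⟨?_, ?_, card_VE hk, ?_⟩
  · exact degree_eq hk H1 hH1 H2 hH2 mrowGamma (hm1_G hk) hm2_G
  · exact degree_eq hk H1 hH1 H2 hH2 mrowGamma' (hm1_G' hk) hm2_G'
  · have hmapG : ((GammaE k H1 H2).adjMatrix ℤ).map (Int.castRingHom ℚ) =
        (GammaE k H1 H2).adjMatrix ℚ := by
      ext i j
      simp [SimpleGraph.adjMatrix_apply, Matrix.map_apply, apply_ite]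
    have hmapG' : ((GammaE' k H1 H2).adjMatrix ℤ).map (Int.castRingHom ℚ) =
        (GammaE' k H1 H2).adjMatrix ℚ := by
      ext i j
      simp [SimpleGraph.adjMatrix_apply, Matrix.map_apply, apply_ite]
    have hchar : ((GammaE k H1 H2).adjMatrix ℚ).charpoly =
        ((GammaE' k H1 H2).adjMatrix ℚ).charpoly := by
      rw [show (GammaE k H1 H2).adjMatrix ℚ = Av k H1 H2 mrowGamma from
            by convert adjq_eq_Av H1 H2 mrowGamma <;> rfl,
          show (GammaE' k H1 H2).adjMatrix ℚ = Av k H1 H2 mrowGamma' from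
            by convert adjq_eq_Av H1 H2 mrowGamma' <;> rfl]
      exact charpoly_conj (Qblk k) _ _ (Qblk_sq hk) (QA_comm hk H1 H2)
    unfold Cospectral
    apply Polynomial.map_injective (Int.castRingHom ℚ) (fun a b hab => by simpa using hab)
    rw [← Matrix.charpoly_map, ← Matrix.charpoly_map, hmapG, hmapG', hchar]
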